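/- arXiv:2202.03923 — 4 statements merged into one kernel-verified Lean document; each statement's English description precedes it below -/
import Mathlib

section
/- Discrete Hodge decomposition in degree 1 (Proposition 3.4, r = 1): the space of discrete 1-forms on the periodic grid is the internal direct sum of the three subspaces range(d⁰), range(δ²) and ker(Δ¹), and these three subspaces are pairwise orthogonal with respect to the inner product on 1-forms; equivalently, every discrete 1-form ω can be written uniquely as ω = d⁰φ-part + δ²ψ-part + h with the first summand in range(d⁰), the second in range(δ²), and Δ¹h = 0. -/
/-- Discrete 0-forms on the periodic grid `ZMod N × ZMod M`. -/
abbrev Form0 (N M : ℕ) := ZMod N × ZMod M → ℝ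
/-- Discrete 1-forms on the periodic grid `ZMod N × ZMod M`: pairs of functions. -/
abbrev Form1 (N M : ℕ) := (ZMod N × ZMod M → ℝ) × (ZMod N × ZMod M → ℝ)
/-- Discrete 2-forms on the periodic grid `ZMod N × ZMod M`. -/
abbrev Form2 (N M : ℕ) := ZMod N × ZMod M → ℝ

/-- Discrete exterior derivative on 0-forms. -/
def d0 (N M : ℕ) : Form0 N M →ₗ[ℝ] Form1 N M where
  toFun φ := (fun p => φ (p.1 + 1, p.2) - φ p, fun p => φ (p.1, p.2 + 1) - φ p)
  map_add' φ ψ := by refine Prod.ext ?_ ?_ <;> funext p <;> simp <;> ring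
  map_smul' c φ := by refine Prod.ext ?_ ?_ <;> funext p <;> simp <;> ring

/-- Discrete exterior derivative on 1-forms. -/
def d1 (N M : ℕ) : Form1 N M →ₗ[ℝ] Form2 N M where
  toFun ω := fun p => (ω.2 (p.1 + 1, p.2) - ω.2 p) - (ω.1 (p.1, p.2 + 1) - ω.1 p)
  map_add' ω η := by funext p; simp; ring
  map_smul' c ω := by funext p; simp; ring

/-- Discrete codifferential on 1-forms. -/
def delta1 (N M : ℕ) : Form1 N M →ₗ[ℝ] Form0 N M where
  toFun ω := fun p => (ω.1 (p.1 - 1, p.2) - ω.1 p) + (ω.2 (p.1, p.2 - 1) - ω.2 p)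
  map_add' ω η := by funext p; simp; ring
  map_smul' c ω := by funext p; simp; ring

/-- Discrete codifferential on 2-forms. -/
def delta2 (N M : ℕ) : Form2 N M →ₗ[ℝ] Form1 N M where
  toFun ψ := (fun p => ψ p - ψ (p.1, p.2 - 1), fun p => ψ (p.1 - 1, p.2) - ψ p)
  map_add' ψ χ := by refine Prod.ext ?_ ?_ <;> funext p <;> simp <;> ring
  map_smul' c ψ := by refine Prod.ext ?_ ?_ <;> funext p <;> simp <;> ring

/-- Discrete Laplacian on 0-forms: `Δ⁰ = δ¹ ∘ d⁰`. -/
def lap0 (N M : ℕ) : Form0 N M →ₗ[ℝ] Form0 N M := delta1 N M ∘ₗ d0 N M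
/-- Discrete Laplacian on 1-forms: `Δ¹ = d⁰ ∘ δ¹ + δ² ∘ d¹`. -/
def lap1 (N M : ℕ) : Form1 N M →ₗ[ℝ] Form1 N M :=
  d0 N M ∘ₗ delta1 N M + delta2 N M ∘ₗ d1 N M
/-- Discrete Laplacian on 2-forms: `Δ² = d¹ ∘ δ²`. -/
def lap2 (N M : ℕ) : Form2 N M →ₗ[ℝ] Form2 N M := d1 N M ∘ₗ delta2 N M

/-- Inner product of two 0-forms (or two 2-forms). -/
def inner0 (N M : ℕ) [NeZero N] [NeZero M] (φ ψ : Form0 N M) : ℝ := ∑ p, φ p * ψ p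
/-- Inner product of two 1-forms. -/
def inner1 (N M : ℕ) [NeZero N] [NeZero M] (ω η : Form1 N M) : ℝ :=
  ∑ p, (ω.1 p * η.1 p + ω.2 p * η.2 p)

/-!
The codifferentials are the adjoints of the exterior derivatives: a summation by parts on the
torus gives `(d⁰φ, ω) = (φ, δ¹ω)` and `(δ²ψ, ω) = (ψ, d¹ω)`. Hence `(Δ¹ω, ω) = |δ¹ω|² + |d¹ω|²`,
so `ker Δ¹ = ker δ¹ ∩ ker d¹`, and together with `δ¹δ² = 0` this makes the three subspaces
pairwise orthogonal. Since `Δ¹` is self-adjoint its range meets its kernel trivially, so by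
counting dimensions every 1-form is `Δ¹x + h = d⁰(δ¹x) + δ²(d¹x) + h` with `Δ¹h = 0`;
orthogonality gives uniqueness.
-/

theorem Fintype.sum_prod_add_fst {α β R : Type*} [AddGroup α] [Fintype α] [Fintype β]
    [AddCommMonoid R] (F : α × β → R) (a : α) :
    ∑ p : α × β, F (p.1 + a, p.2) = ∑ p, F p :=
  Fintype.sum_equiv ((Equiv.addRight a).prodCongr (Equiv.refl β)) _ _ fun _ => rfl

theorem Fintype.sum_prod_add_snd {α β R : Type*} [Fintype α] [AddGroup β] [Fintype β]
    [AddCommMonoid R] (F : α × β → R) (b : β) :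
    ∑ p : α × β, F (p.1, p.2 + b) = ∑ p, F p :=
  Fintype.sum_equiv ((Equiv.refl α).prodCongr (Equiv.addRight b)) _ _ fun _ => rfl

theorem LinearMap.range_sup_ker_eq_top_of_disjoint {K V : Type*} [DivisionRing K]
    [AddCommGroup V] [Module K V] [FiniteDimensional K V] (f : V →ₗ[K] V)
    (h : Disjoint (LinearMap.range f) (LinearMap.ker f)) :
    LinearMap.range f ⊔ LinearMap.ker f = ⊤ :=
  Submodule.eq_top_of_disjoint _ _ (f.finrank_range_add_finrank_ker).ge h

section Operators

variable {N M : ℕ}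

theorem delta1_delta2 (ψ : Form2 N M) : delta1 N M (delta2 N M ψ) = 0 := by
  funext p
  simp only [delta1, delta2, LinearMap.coe_mk, AddHom.coe_mk, Pi.zero_apply]
  ring

theorem lap1_apply (ω : Form1 N M) :
    lap1 N M ω = d0 N M (delta1 N M ω) + delta2 N M (d1 N M ω) := rfl

end Operators

section InnerProduct

variable {N M : ℕ} [NeZero N] [NeZero M]

theorem inner0_zero_right (φ : Form0 N M) : inner0 N M φ 0 = 0 := by
  simp [inner0]

theorem inner0_self_nonneg (φ : Form0 N M) : 0 ≤ inner0 N M φ φ :=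
  Finset.sum_nonneg fun p _ => mul_self_nonneg (φ p)

theorem inner0_self_eq_zero {φ : Form0 N M} : inner0 N M φ φ = 0 ↔ φ = 0 := by
  rw [inner0, Fintype.sum_eq_zero_iff_of_nonneg fun p => mul_self_nonneg (φ p)]
  simp only [funext_iff, Pi.zero_apply, mul_self_eq_zero]

theorem inner1_eq_inner0_add_inner0 (ω η : Form1 N M) :
    inner1 N M ω η = inner0 N M ω.1 η.1 + inner0 N M ω.2 η.2 :=
  Finset.sum_add_distrib

theorem inner1_comm (ω η : Form1 N M) : inner1 N M ω η = inner1 N M η ω := by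
  simp only [inner1, mul_comm]

theorem inner1_add_left (ω η ξ : Form1 N M) :
    inner1 N M (ω + η) ξ = inner1 N M ω ξ + inner1 N M η ξ := by
  simp only [inner1, Prod.fst_add, Prod.snd_add, Pi.add_apply, ← Finset.sum_add_distrib]
  exact Finset.sum_congr rfl fun _ _ => by ring

theorem inner1_add_right (ω η ξ : Form1 N M) :
    inner1 N M ω (η + ξ) = inner1 N M ω η + inner1 N M ω ξ := by
  rw [inner1_comm, inner1_add_left, inner1_comm η, inner1_comm ξ]

theorem inner1_zero_right (ω : Form1 N M) : inner1 N M ω 0 = 0 := by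
  simp [inner1]

theorem inner1_self_eq_zero {ω : Form1 N M} : inner1 N M ω ω = 0 ↔ ω = 0 := by
  rw [inner1_eq_inner0_add_inner0, add_eq_zero_iff_of_nonneg (inner0_self_nonneg _)
    (inner0_self_nonneg _), inner0_self_eq_zero, inner0_self_eq_zero, Prod.ext_iff]
  rfl

theorem inner1_d0 (φ : Form0 N M) (ω : Form1 N M) :
    inner1 N M (d0 N M φ) ω = inner0 N M φ (delta1 N M ω) := by
  have shift₁ := Fintype.sum_prod_add_fst (fun p => φ p * ω.1 (p.1 - 1, p.2)) 1
  have shift₂ := Fintype.sum_prod_add_snd (fun p => φ p * ω.2 (p.1, p.2 - 1)) 1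
  simp only [add_sub_cancel_right] at shift₁ shift₂
  simp only [inner1, inner0, d0, delta1, LinearMap.coe_mk, AddHom.coe_mk, sub_mul, mul_add,
    mul_sub, Finset.sum_add_distrib, Finset.sum_sub_distrib, shift₁, shift₂]

theorem inner1_delta2 (ψ : Form2 N M) (ω : Form1 N M) :
    inner1 N M (delta2 N M ψ) ω = inner0 N M ψ (d1 N M ω) := by
  have shift₁ := Fintype.sum_prod_add_snd (fun p => ψ (p.1, p.2 - 1) * ω.1 p) 1
  have shift₂ := Fintype.sum_prod_add_fst (fun p => ψ (p.1 - 1, p.2) * ω.2 p) 1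
  simp only [add_sub_cancel_right] at shift₁ shift₂
  simp only [inner1, inner0, delta2, d1, LinearMap.coe_mk, AddHom.coe_mk, sub_mul, mul_sub,
    Finset.sum_add_distrib, Finset.sum_sub_distrib, ← shift₁, ← shift₂]
  ring

theorem inner1_lap1 (ω η : Form1 N M) :
    inner1 N M (lap1 N M ω) η
      = inner0 N M (delta1 N M ω) (delta1 N M η) + inner0 N M (d1 N M ω) (d1 N M η) := by
  rw [lap1_apply, inner1_add_left, inner1_d0, inner1_delta2]

end InnerProduct

section Harmonic

variable {N M : ℕ} [NeZero N] [NeZero M]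

theorem lap1_eq_zero_iff {ω : Form1 N M} :
    lap1 N M ω = 0 ↔ delta1 N M ω = 0 ∧ d1 N M ω = 0 := by
  refine ⟨fun h => ?_, fun ⟨h₁, h₂⟩ => by rw [lap1_apply, h₁, h₂, map_zero, map_zero, add_zero]⟩
  have hsum : inner0 N M (delta1 N M ω) (delta1 N M ω) + inner0 N M (d1 N M ω) (d1 N M ω) = 0 := by
    rw [← inner1_lap1, h, inner1_comm, inner1_zero_right]
  rwa [add_eq_zero_iff_of_nonneg (inner0_self_nonneg _) (inner0_self_nonneg _),
    inner0_self_eq_zero, inner0_self_eq_zero] at hsum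

theorem inner1_d0_delta2 (φ : Form0 N M) (ψ : Form2 N M) :
    inner1 N M (d0 N M φ) (delta2 N M ψ) = 0 := by
  rw [inner1_d0, delta1_delta2, inner0_zero_right]

theorem inner1_d0_of_lap1_eq_zero (φ : Form0 N M) {h : Form1 N M} (hh : lap1 N M h = 0) :
    inner1 N M (d0 N M φ) h = 0 := by
  rw [inner1_d0, (lap1_eq_zero_iff.mp hh).1, inner0_zero_right]

theorem inner1_delta2_of_lap1_eq_zero (ψ : Form2 N M) {h : Form1 N M} (hh : lap1 N M h = 0) :
    inner1 N M (delta2 N M ψ) h = 0 := by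
  rw [inner1_delta2, (lap1_eq_zero_iff.mp hh).2, inner0_zero_right]

theorem disjoint_range_ker_lap1 :
    Disjoint (LinearMap.range (lap1 N M)) (LinearMap.ker (lap1 N M)) := by
  rw [Submodule.disjoint_def]
  rintro _ ⟨x, rfl⟩ hx
  obtain ⟨hδ, hd⟩ := lap1_eq_zero_iff.mp (LinearMap.mem_ker.mp hx)
  rw [← inner1_self_eq_zero, inner1_lap1, hδ, hd, inner0_zero_right, inner0_zero_right, add_zero]

theorem exists_eq_d0_add_delta2_add_harmonic (ω : Form1 N M) :
    ∃ x h, lap1 N M h = 0 ∧ ω = d0 N M (delta1 N M x) + delta2 N M (d1 N M x) + h := by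
  have hω : ω ∈ LinearMap.range (lap1 N M) ⊔ LinearMap.ker (lap1 N M) := by
    rw [LinearMap.range_sup_ker_eq_top_of_disjoint _ disjoint_range_ker_lap1]
    trivial
  obtain ⟨_, ⟨x, rfl⟩, h, hh, rfl⟩ := Submodule.mem_sup.mp hω
  exact ⟨x, h, hh, rfl⟩

theorem eq_zero_of_d0_add_delta2_add_harmonic_eq_zero {a b h : Form1 N M}
    (ha : a ∈ LinearMap.range (d0 N M)) (hb : b ∈ LinearMap.range (delta2 N M))
    (hh : lap1 N M h = 0) (hsum : a + b + h = 0) : a = 0 ∧ b = 0 ∧ h = 0 := by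
  obtain ⟨φ, rfl⟩ := ha
  obtain ⟨ψ, rfl⟩ := hb
  have hφ : d0 N M φ = 0 := by
    have := congrArg (inner1 N M (d0 N M φ)) hsum
    rwa [inner1_add_right, inner1_add_right, inner1_d0_delta2, inner1_d0_of_lap1_eq_zero φ hh,
      inner1_zero_right, add_zero, add_zero, inner1_self_eq_zero] at this
  have hψ : delta2 N M ψ = 0 := by
    have := congrArg (inner1 N M (delta2 N M ψ)) hsum
    rwa [inner1_add_right, inner1_add_right, inner1_comm _ (d0 N M φ), inner1_d0_delta2,
      inner1_delta2_of_lap1_eq_zero ψ hh, inner1_zero_right, zero_add, add_zero,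
      inner1_self_eq_zero] at this
  rw [hφ, hψ, zero_add, zero_add] at hsum
  exact ⟨hφ, hψ, hsum⟩

end Harmonic

def hodgeSum (N M : ℕ) :
    LinearMap.range (d0 N M) × LinearMap.range (delta2 N M) × LinearMap.ker (lap1 N M)
      →ₗ[ℝ] Form1 N M :=
  (LinearMap.range (d0 N M)).subtype.coprod
    ((LinearMap.range (delta2 N M)).subtype.coprod (LinearMap.ker (lap1 N M)).subtype)

theorem hodgeSum_apply {N M : ℕ}
    (x : LinearMap.range (d0 N M) × LinearMap.range (delta2 N M) × LinearMap.ker (lap1 N M)) :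
    hodgeSum N M x = (x.1 : Form1 N M) + (x.2.1 : Form1 N M) + (x.2.2 : Form1 N M) :=
  (add_assoc _ _ _).symm

theorem hodgeSum_bijective (N M : ℕ) [NeZero N] [NeZero M] :
    Function.Bijective (hodgeSum N M) := by
  refine ⟨(injective_iff_map_eq_zero _).mpr fun ⟨⟨a, ha⟩, ⟨b, hb⟩, ⟨h, hh⟩⟩ hsum => ?_, fun ω => ?_⟩
  · rw [hodgeSum_apply] at hsum
    obtain ⟨rfl, rfl, rfl⟩ := eq_zero_of_d0_add_delta2_add_harmonic_eq_zero ha hb hh hsum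
    rfl
  · obtain ⟨x, h, hh, rfl⟩ := exists_eq_d0_add_delta2_add_harmonic ω
    exact ⟨(⟨_, delta1 N M x, rfl⟩, ⟨_, _, rfl⟩, ⟨h, hh⟩), hodgeSum_apply _⟩

/-- **Discrete Hodge decomposition in degree 1** (Proposition 3.4, `r = 1`): the subspaces
`range(d⁰)`, `range(δ²)` and `ker(Δ¹)` of the space of discrete 1-forms on the periodic grid
are pairwise orthogonal, and every discrete 1-form decomposes uniquely as a sum of an element
of `range(d⁰)`, an element of `range(δ²)`, and a harmonic 1-form. -/
theorem discrete_hodge_decomposition_deg1 (N M : ℕ) [NeZero N] [NeZero M] :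
    (∀ a ∈ LinearMap.range (d0 N M), ∀ b ∈ LinearMap.range (delta2 N M),
        inner1 N M a b = 0) ∧
    (∀ a ∈ LinearMap.range (d0 N M), ∀ h ∈ LinearMap.ker (lap1 N M),
        inner1 N M a h = 0) ∧
    (∀ b ∈ LinearMap.range (delta2 N M), ∀ h ∈ LinearMap.ker (lap1 N M),
        inner1 N M b h = 0) ∧
    ∀ ω : Form1 N M,
      ∃! x : LinearMap.range (d0 N M) × LinearMap.range (delta2 N M) ×
          LinearMap.ker (lap1 N M),
        ω = (x.1 : Form1 N M) + (x.2.1 : Form1 N M) + (x.2.2 : Form1 N M) := by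
  refine ⟨?_, ?_, ?_, fun ω => ?_⟩
  · rintro _ ⟨φ, rfl⟩ _ ⟨ψ, rfl⟩
    exact inner1_d0_delta2 φ ψ
  · rintro _ ⟨φ, rfl⟩ _ hh
    exact inner1_d0_of_lap1_eq_zero φ hh
  · rintro _ ⟨ψ, rfl⟩ _ hh
    exact inner1_delta2_of_lap1_eq_zero ψ hh
  · obtain ⟨x, hx, hunique⟩ := (hodgeSum_bijective N M).existsUnique ω
    exact ⟨x, hx.symm.trans (hodgeSum_apply x),
      fun y hy => hunique y ((hodgeSum_apply y).trans hy.symm)⟩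
end

section
/- Discrete Pythagoras identity (equation (3.5)): for every discrete 0-form φ and every discrete 2-form ψ on the periodic grid, ‖d⁰φ + δ²ψ‖² = ‖d⁰φ‖² + ‖δ²ψ‖², where the sum and norm are taken in the space of discrete 1-forms. -/
lemma shift_sum {N M : ℕ} [NeZero N] [NeZero M] (a : ZMod N) (b : ZMod M)
    (f : ZMod N × ZMod M → ℝ) :
    ∑ p : ZMod N × ZMod M, f (p.1 + a, p.2 + b) = ∑ p, f p := by
  exact Fintype.sum_equiv ((Equiv.addRight a).prodCongr (Equiv.addRight b)) _ _ (fun x => rfl)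

lemma cross_zero (N M : ℕ) [NeZero N] [NeZero M] (φ : Form0 N M) (ψ : Form2 N M) :
    inner1 N M (d0 N M φ) (delta2 N M ψ) = 0 := by
  have h1 : ∑ p : ZMod N × ZMod M, φ (p.1 + 1, p.2) * (ψ p - ψ (p.1, p.2 - 1))
      = ∑ p : ZMod N × ZMod M, φ p * (ψ (p.1 - 1, p.2) - ψ (p.1 - 1, p.2 - 1)) := by
    rw [← shift_sum 1 0 (fun p => φ p * (ψ (p.1 - 1, p.2) - ψ (p.1 - 1, p.2 - 1)))]
    simp
  have h2 : ∑ p : ZMod N × ZMod M, φ (p.1, p.2 + 1) * (ψ (p.1 - 1, p.2) - ψ p)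
      = ∑ p : ZMod N × ZMod M, φ p * (ψ (p.1 - 1, p.2 - 1) - ψ (p.1, p.2 - 1)) := by
    rw [← shift_sum 0 1 (fun p => φ p * (ψ (p.1 - 1, p.2 - 1) - ψ (p.1, p.2 - 1)))]
    simp
  simp only [inner1, d0, delta2, LinearMap.coe_mk, AddHom.coe_mk]
  have expand : ∀ p : ZMod N × ZMod M,
      (φ (p.1 + 1, p.2) - φ p) * (ψ p - ψ (p.1, p.2 - 1)) +
      (φ (p.1, p.2 + 1) - φ p) * (ψ (p.1 - 1, p.2) - ψ p)
      = φ (p.1 + 1, p.2) * (ψ p - ψ (p.1, p.2 - 1))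
        + φ (p.1, p.2 + 1) * (ψ (p.1 - 1, p.2) - ψ p)
        - φ p * (ψ p - ψ (p.1, p.2 - 1))
        - φ p * (ψ (p.1 - 1, p.2) - ψ p) := by
    intro p; ring
  rw [Finset.sum_congr rfl (fun p _ => expand p)]
  simp only [Finset.sum_sub_distrib, Finset.sum_add_distrib, h1, h2]
  rw [← Finset.sum_add_distrib, ← Finset.sum_sub_distrib, ← Finset.sum_sub_distrib]
  exact Finset.sum_eq_zero fun p _ => by ring

/-- **Discrete Pythagoras identity** (equation (3.5)): for every discrete 0-form `φ` and every
discrete 2-form `ψ` on the periodic grid, `‖d⁰φ + δ²ψ‖² = ‖d⁰φ‖² + ‖δ²ψ‖²` in the space of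
discrete 1-forms. -/
theorem discrete_pythagoras (N M : ℕ) [NeZero N] [NeZero M]
    (φ : Form0 N M) (ψ : Form2 N M) :
    inner1 N M (d0 N M φ + delta2 N M ψ) (d0 N M φ + delta2 N M ψ) =
      inner1 N M (d0 N M φ) (d0 N M φ) + inner1 N M (delta2 N M ψ) (delta2 N M ψ) := by
  have hc := cross_zero N M φ ψ
  simp only [inner1, Prod.fst_add, Prod.snd_add, Pi.add_apply] at *
  have : ∀ p : ZMod N × ZMod M,
      (((d0 N M) φ).1 p + ((delta2 N M) ψ).1 p) * (((d0 N M) φ).1 p + ((delta2 N M) ψ).1 p) +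
      (((d0 N M) φ).2 p + ((delta2 N M) ψ).2 p) * (((d0 N M) φ).2 p + ((delta2 N M) ψ).2 p)
      = (((d0 N M) φ).1 p * ((d0 N M) φ).1 p + ((d0 N M) φ).2 p * ((d0 N M) φ).2 p)
      + (((delta2 N M) ψ).1 p * ((delta2 N M) ψ).1 p + ((delta2 N M) ψ).2 p * ((delta2 N M) ψ).2 p)
      + 2 * (((d0 N M) φ).1 p * ((delta2 N M) ψ).1 p + ((d0 N M) φ).2 p * ((delta2 N M) ψ).2 p) := by
    intro p; ring
  rw [Finset.sum_congr rfl (fun p _ => this p), Finset.sum_add_distrib,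
    Finset.sum_add_distrib, ← Finset.mul_sum, hc]
  ring
end

section
/- First cohomology of the combinatorial torus: for the 2 × 2 periodic grid, the range of the ℝ-linear map d⁰ (on 0-forms) is contained in the kernel of the ℝ-linear map d¹ (on 1-forms), and the quotient real vector space H¹(T) = ker(d¹) / range(d⁰) has dimension 2, i.e. H¹(T) is isomorphic to ℝ². -/
/-- Holonomy map: periods of a 1-form along the two fundamental cycles. -/
def hol : Form1 2 2 →ₗ[ℝ] ℝ × ℝ where
  toFun ω := (ω.1 (0, 0) + ω.1 (1, 0), ω.2 (0, 0) + ω.2 (0, 1))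
  map_add' ω η := by simp [Prod.ext_iff]; constructor <;> ring
  map_smul' c ω := by simp [Prod.ext_iff]; constructor <;> ring

lemma exact_of_closed_of_hol_zero (ω : Form1 2 2) (h1 : d1 2 2 ω = 0)
    (h2 : ω.1 (0, 0) + ω.1 (1, 0) = 0) (h3 : ω.2 (0, 0) + ω.2 (0, 1) = 0) :
    ω ∈ LinearMap.range (d0 2 2) := by
  refine ⟨fun p => (if p.1 = 1 then ω.1 (0, p.2) else 0) +
      (if p.2 = 1 then ω.2 (0, 0) else 0), ?_⟩
  have c00 := congrFun h1 (0, 0)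
  have c10 := congrFun h1 (1, 0)
  have c01 := congrFun h1 (0, 1)
  have e1 : (1 : ZMod 2) + 1 = 0 := by decide
  have e0 : (0 : ZMod 2) + 1 = 1 := by decide
  simp only [d1, LinearMap.coe_mk, AddHom.coe_mk, Pi.zero_apply, e1, e0] at c00 c10 c01
  norm_num at c00 c10 c01 h2 h3
  have hcase : ∀ a : ZMod 2, a = 0 ∨ a = 1 := by decide
  refine Prod.ext ?_ ?_ <;> funext p <;> obtain ⟨a, b⟩ := p <;>
    rcases hcase a with rfl | rfl <;> rcases hcase b with rfl | rfl <;>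
    simp only [d0, LinearMap.coe_mk, AddHom.coe_mk, e1, e0] <;> norm_num <;> linarith

/-- **First cohomology of the combinatorial torus**: on the `2 × 2` periodic grid every exact
1-form is closed, i.e. `range(d⁰) ≤ ker(d¹)`, and the quotient space
`H¹(T) = ker(d¹) / range(d⁰)` is two-dimensional, hence isomorphic to `ℝ²`. -/
theorem cohomology_one_torus :
    LinearMap.range (d0 2 2) ≤ LinearMap.ker (d1 2 2) ∧
    Module.finrank ℝ
      (LinearMap.ker (d1 2 2) ⧸
        Submodule.comap (LinearMap.ker (d1 2 2)).subtype (LinearMap.range (d0 2 2))) = 2 ∧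
    Nonempty
      ((LinearMap.ker (d1 2 2) ⧸
          Submodule.comap (LinearMap.ker (d1 2 2)).subtype (LinearMap.range (d0 2 2)))
        ≃ₗ[ℝ] (ℝ × ℝ)) := by
  set F : LinearMap.ker (d1 2 2) →ₗ[ℝ] ℝ × ℝ := hol ∘ₗ (LinearMap.ker (d1 2 2)).subtype with hF
  have hker : LinearMap.ker F =
      Submodule.comap (LinearMap.ker (d1 2 2)).subtype (LinearMap.range (d0 2 2)) := by
    ext ⟨ω, hω⟩
    rw [LinearMap.mem_ker] at hω
    constructor
    · intro h
      simp only [hF, hol, LinearMap.mem_ker, LinearMap.comp_apply, Submodule.coe_subtype,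
        LinearMap.coe_mk, AddHom.coe_mk, Prod.mk_eq_zero] at h
      exact exact_of_closed_of_hol_zero ω hω h.1 h.2
    · rintro ⟨φ, hφ⟩
      simp only [Submodule.coe_subtype] at hφ
      simp only [hF, hol, LinearMap.mem_ker, LinearMap.comp_apply, Submodule.coe_subtype,
        LinearMap.coe_mk, AddHom.coe_mk, Prod.mk_eq_zero, ← hφ, d0]
      constructor <;>
        simp only [show (1 : ZMod 2) + 1 = 0 from by decide,
          show (0 : ZMod 2) + 1 = 1 from by decide] <;> ring
  have hsurj : Function.Surjective F := by
    intro ⟨x, y⟩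
    refine ⟨⟨(fun _ => x / 2, fun _ => y / 2), ?_⟩, ?_⟩
    · rw [LinearMap.mem_ker]; funext p; simp [d1]
    · simp only [hF, hol, LinearMap.comp_apply, Submodule.coe_subtype, LinearMap.coe_mk,
        AddHom.coe_mk]
      norm_num
  have e : (LinearMap.ker (d1 2 2) ⧸
      Submodule.comap (LinearMap.ker (d1 2 2)).subtype (LinearMap.range (d0 2 2)))
      ≃ₗ[ℝ] ℝ × ℝ := hker ▸ F.quotKerEquivOfSurjective hsurj
  refine ⟨?_, e.finrank_eq.trans (by simp), ⟨e⟩⟩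
  rintro _ ⟨φ, rfl⟩
  rw [LinearMap.mem_ker]
  funext p
  simp only [d0, d1, LinearMap.coe_mk, AddHom.coe_mk, Pi.zero_apply]
  ring
end

section
/- Second cohomology of the combinatorial torus: for the 2 × 2 periodic grid, the quotient real vector space H²(T) of the space of all discrete 2-forms by the range of the ℝ-linear map d¹ (on 1-forms) has dimension 1; equivalently, a 2-form ψ lies in range(d¹) if and only if Σ_{(k,s)} ψ(k,s) = 0, and H²(T) is isomorphic to ℝ. -/
/-!
Exact 2-forms have total sum zero because d¹ω is a difference of forward differences of ω, and a
forward difference sums to zero over a finite group. Conversely, on the cycle `ZMod n` a function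
summing to zero is the forward difference of its partial sums. Given ψ of total sum zero, this
first yields a 1-form correcting ψ in the column `k = 0` so that every row of ψ sums to zero, and
then, row by row, a 1-form whose derivative is the corrected ψ. So range(d¹) is the kernel of the
surjective functional ψ ↦ Σ ψ, and H² ≅ ℝ.
-/

open fwdDiff

theorem sum_fwdDiff_eq_zero {G A : Type*} [AddCommGroup G] [Fintype G] [AddCommGroup A]
    (h : G) (g : G → A) : ∑ x, Δ_[h] g x = 0 := by
  simp only [fwdDiff, Finset.sum_sub_distrib,
    Fintype.sum_equiv (Equiv.addRight h) (fun x => g (x + h)) g (fun _ => rfl), sub_self]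

theorem ZMod.sum_range_eq_sum {A : Type*} [AddCommMonoid A] (n : ℕ) [NeZero n]
    (f : ZMod n → A) :
    ∑ j ∈ Finset.range n, f j = ∑ k, f k :=
  Finset.sum_nbij' Nat.cast ZMod.val (by simp) (by simp [ZMod.val_lt])
    (fun j hj => ZMod.val_cast_of_lt (Finset.mem_range.mp hj)) (by simp) (by simp)

theorem ZMod.exists_fwdDiff_eq_of_sum_eq_zero {A : Type*} [AddCommGroup A] {n : ℕ} [NeZero n]
    (f : ZMod n → A) (hf : ∑ k, f k = 0) : ∃ g : ZMod n → A, Δ_[1] g = f := by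
  refine ⟨fun k => ∑ j ∈ Finset.range k.val, f j, funext fun k => ?_⟩
  simp only [fwdDiff]
  rcases (Nat.succ_le_of_lt (ZMod.val_lt k)).lt_or_eq with hlt | heq
  · have hn : n ≠ 1 := by rintro rfl; omega
    rw [ZMod.val_add_of_lt (by rwa [ZMod.val_one'' hn]), ZMod.val_one'' hn,
      Finset.sum_range_succ, ZMod.natCast_zmod_val, add_sub_cancel_left]
  · have hk : k + 1 = 0 := by
      rw [← ZMod.natCast_zmod_val k, ← Nat.cast_succ, heq, ZMod.natCast_self]
    rw [hk, ZMod.val_zero, Finset.sum_range_zero, zero_sub, neg_eq_iff_add_eq_zero, ← hf,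
      ← ZMod.sum_range_eq_sum,
      show Finset.range n = Finset.range (k.val + 1) from congrArg _ heq.symm,
      Finset.sum_range_succ, ZMod.natCast_zmod_val]

theorem d1_eq_fwdDiff {N M : ℕ} (ω : Form1 N M) :
    d1 N M ω =
      Δ_[((1 : ZMod N), (0 : ZMod M))] ω.2 - Δ_[((0 : ZMod N), (1 : ZMod M))] ω.1 := by
  funext ⟨k, s⟩
  simp [d1, fwdDiff]

section

variable {N M : ℕ} [NeZero N] [NeZero M]

theorem sum_d1_eq_zero (ω : Form1 N M) : ∑ p, d1 N M ω p = 0 := by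
  simp only [d1_eq_fwdDiff, Pi.sub_apply, Finset.sum_sub_distrib, sum_fwdDiff_eq_zero, sub_self]

theorem exists_d1_eq_of_sum_eq_zero (ψ : Form2 N M) (hψ : ∑ p, ψ p = 0) :
    ∃ ω, d1 N M ω = ψ := by
  set rowSum : ZMod M → ℝ := fun s => ∑ k, ψ (k, s)
  obtain ⟨w, hw⟩ := ZMod.exists_fwdDiff_eq_of_sum_eq_zero rowSum
    (by rw [← hψ, Fintype.sum_prod_type_right])
  have hrow : ∀ s, ∑ k, (ψ (k, s) - if k = 0 then rowSum s else 0) = 0 := fun s => by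
    simp [Finset.sum_sub_distrib, rowSum]
  choose v hv using fun s => ZMod.exists_fwdDiff_eq_of_sum_eq_zero _ (hrow s)
  refine ⟨(fun p => if p.1 = 0 then -w p.2 else 0, fun p => v p.2 p.1),
    funext fun ⟨k, s⟩ => ?_⟩
  have hvks := congrFun (hv s) k
  have hws := congrFun hw s
  simp only [fwdDiff] at hvks hws
  by_cases hk : k = 0 <;> simp [d1, hk] at hvks ⊢ <;> linarith

theorem mem_range_d1_iff (ψ : Form2 N M) : ψ ∈ LinearMap.range (d1 N M) ↔ ∑ p, ψ p = 0 :=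
  ⟨fun ⟨ω, hω⟩ => hω ▸ sum_d1_eq_zero ω, exists_d1_eq_of_sum_eq_zero ψ⟩

variable (N M) in
def integral2 : Form2 N M →ₗ[ℝ] ℝ where
  toFun ψ := ∑ p, ψ p
  map_add' _ _ := Finset.sum_add_distrib
  map_smul' _ _ := (Finset.mul_sum _ _ _).symm

theorem range_d1_eq_ker_integral2 : LinearMap.range (d1 N M) = LinearMap.ker (integral2 N M) :=
  Submodule.ext mem_range_d1_iff

theorem integral2_surjective : Function.Surjective (integral2 N M) :=
  fun c => ⟨Pi.single 0 c, by simp [integral2]⟩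

variable (N M) in
abbrev Cohomology2 := Form2 N M ⧸ LinearMap.range (d1 N M)

variable (N M) in
noncomputable def cohomology2EquivReal : Cohomology2 N M ≃ₗ[ℝ] ℝ :=
  (Submodule.quotEquivOfEq _ _ range_d1_eq_ker_integral2).trans
    ((integral2 N M).quotKerEquivOfSurjective integral2_surjective)

end

/-- **Second cohomology of the combinatorial torus**: on the `2 × 2` periodic grid a 2-form
`ψ` is exact, i.e. `ψ ∈ range(d¹)`, iff `Σ_{(k,s)} ψ(k,s) = 0`, and the quotient space
`H²(T)` of all 2-forms modulo `range(d¹)` is one-dimensional, hence isomorphic to `ℝ`. -/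
theorem cohomology_two_torus :
    (∀ ψ : Form2 2 2, ψ ∈ LinearMap.range (d1 2 2) ↔ ∑ p, ψ p = 0) ∧
    Module.finrank ℝ (Form2 2 2 ⧸ LinearMap.range (d1 2 2)) = 1 ∧
    Nonempty ((Form2 2 2 ⧸ LinearMap.range (d1 2 2)) ≃ₗ[ℝ] ℝ) :=
  ⟨mem_range_d1_iff, (cohomology2EquivReal 2 2).finrank_eq.trans (Module.finrank_self ℝ),
    ⟨cohomology2EquivReal 2 2⟩⟩
end
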